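/- Let Ω ⊂ ℝ³ be open, bounded and convex with L³(Ω) = 1, let m be a mass vector, T > 0, and let z = (z_1,…,z_N) : [0,T] → ℝ^{3N} be a continuously differentiable solution of the seed ODE, with associated weight vectors w(t) satisfying L³(C_j(z(t),w(t))) = m_j for all j and t. Then the quadratic transport cost t ↦ Σ_{i=1}^N ∫_{C_i(z(t),w(t))} |x − z_i(t)|² dx is constant on [0,T]. (This quantity equals the squared Wasserstein 2-distance between L³⌐Ω and the discrete measure Σ_i m_i δ_{z_i(t)}.) -/

import Mathlib

/-!
Write `F(t)` for the transport cost and `c_i(t)` for the centroids of the cells. Laguerre cells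
minimise the transport cost among all partitions of `Ω` with masses `m` (on every cell the cost
density `|x - z_i|² - w_i` equals the lower envelope `min_j (|x - z_j|² - w_j)`, which bounds it
from below on any other partition). So `F(s)` is at most the cost of the cells at time `t` sent to
the seeds `z(s)`, and expanding the squares gives
`F(s) - F(t) ≤ Σ_i m_i (|z_i(s) - z_i(t)|² - 2⟪z_i(s) - z_i(t), c_i(t) - z_i(t)⟫)`.
The first-order term `⟪ż_i(t), c_i(t) - z_i(t)⟫ = ⟪J(z_i - c_i), c_i - z_i⟫` vanishes because `J`
is skew, so `F(s) - F(t)` is controlled by the Taylor remainder of `z`, uniformly on `[0, T]`.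
Exchanging `s` and `t`, `F` has derivative zero everywhere, hence is constant.
-/

open MeasureTheory Set Filter
open scoped ENNReal Topology RealInnerProductSpace

noncomputable section

/-- Geostrophic space: `ℝ³` with the Euclidean norm. -/
abbrev E3 : Type := EuclideanSpace ℝ (Fin 3)

/-- The matrix `J` encoding planetary rotation: `J₁₂ = -1`, `J₂₁ = 1`, all other entries `0`. -/
def matJ : Matrix (Fin 3) (Fin 3) ℝ := !![0, -1, 0; 1, 0, 0; 0, 0, 0]

/-- `J` as a (continuous) linear map on `ℝ³`. -/
def J : E3 →L[ℝ] E3 := LinearMap.toContinuousLinearMap (Matrix.toEuclideanLin matJ)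

/-- The Laguerre cell `C_i(z, w)` of `Ω` generated by seeds `z` and weights `w`. -/
def lagCell {N : ℕ} (Ω : Set E3) (z : Fin N → E3) (w : Fin N → ℝ) (i : Fin N) : Set E3 :=
  {x | x ∈ Ω ∧ ∀ j, ‖x - z i‖ ^ 2 - w i ≤ ‖x - z j‖ ^ 2 - w j}

/-- `z : [0,T] → ℝ^{3N}` is a continuously differentiable solution of the seed ODE
`ż_i = J (z_i - x_i(z))`, where `x_i(z)` is the centroid of the `i`-th cell of the optimal
Laguerre tessellation of `Ω` with masses `m`. -/
def SeedODESol (Ω : Set E3) {N : ℕ} (m : Fin N → ℝ) (T : ℝ) (z : ℝ → Fin N → E3) : Prop :=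
  ContDiffOn ℝ 1 z (Icc 0 T) ∧
  ∀ t ∈ Icc (0:ℝ) T,
    (∀ i j : Fin N, i ≠ j → z t i ≠ z t j) ∧
    ∃ w : Fin N → ℝ,
      (∀ j, volume (lagCell Ω (z t) w j) = ENNReal.ofReal (m j)) ∧
      ∀ i, HasDerivWithinAt (fun s => z s i)
        (J (z t i - (m i)⁻¹ • ∫ x in lagCell Ω (z t) w i, x)) (Icc 0 T) t

open Bornology

section Calculus

variable {X : Type*} [NormedAddCommGroup X] [NormedSpace ℝ X] {f : ℝ → X} {a b : ℝ}

theorem ContDiffOn.exists_pos_norm_sub_sub_smul_derivWithin_le (hab : a < b)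
    (hf : ContDiffOn ℝ 1 f (Icc a b)) {ε : ℝ} (hε : 0 < ε) :
    ∃ δ > 0, ∀ s ∈ Icc a b, ∀ t ∈ Icc a b, |s - t| < δ →
      ‖f s - f t - (s - t) • derivWithin f (Icc a b) t‖ ≤ ε * |s - t| := by
  set f' := derivWithin f (Icc a b)
  have hf' : ContinuousOn f' (Icc a b) := hf.continuousOn_derivWithin (uniqueDiffOn_Icc hab) le_rfl
  obtain ⟨δ, hδ, hf'δ⟩ := Metric.uniformContinuousOn_iff.mp
    (isCompact_Icc.uniformContinuousOn_of_continuous hf') ε hε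
  refine ⟨δ, hδ, fun s hs t ht hst => ?_⟩
  have hsub : uIcc t s ⊆ Icc a b := uIcc_subset_Icc ht hs
  have hderiv : ∀ r ∈ uIcc t s,
      HasDerivWithinAt (fun r => f r - r • f' t) (f' r - f' t) (uIcc t s) r := fun r hr =>
    (((hf.differentiableOn one_ne_zero r (hsub hr)).hasDerivWithinAt).mono hsub).sub
      ((hasDerivAt_id r).smul_const (f' t)).hasDerivWithinAt |>.congr_deriv (by simp [f'])
  have hbound : ∀ r ∈ uIcc t s, ‖f' r - f' t‖ ≤ ε := fun r hr => by
    simpa only [dist_eq_norm] using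
      (hf'δ r (hsub hr) t ht ((abs_sub_left_of_mem_uIcc hr).trans_lt hst)).le
  have := (convex_uIcc t s).norm_image_sub_le_of_norm_hasDerivWithin_le hderiv hbound
    left_mem_uIcc right_mem_uIcc
  rwa [Real.norm_eq_abs, show f s - s • f' t - (f t - t • f' t) = f s - f t - (s - t) • f' t by
    rw [sub_smul]; abel] at this

theorem eq_left_of_forall_sub_le_mul_abs {F : ℝ → ℝ}
    (hF : ∀ ε > 0, ∃ δ > 0, ∀ s ∈ Icc a b, ∀ t ∈ Icc a b, |s - t| < δ → F s - F t ≤ ε * |s - t|) :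
    ∀ t ∈ Icc a b, F t = F a := by
  have hderiv : ∀ t ∈ Icc a b, HasDerivWithinAt F 0 (Icc a b) t := by
    intro t ht
    rw [hasDerivWithinAt_iff_isLittleO, Asymptotics.isLittleO_iff]
    intro ε hε
    obtain ⟨δ, hδ, hFδ⟩ := hF ε hε
    filter_upwards [self_mem_nhdsWithin, nhdsWithin_le_nhds (Metric.ball_mem_nhds t hδ)]
      with s hs hst
    rw [Metric.mem_ball, Real.dist_eq] at hst
    rw [smul_zero, sub_zero, Real.norm_eq_abs, Real.norm_eq_abs, abs_sub_le_iff]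
    exact ⟨hFδ s hs t ht hst, abs_sub_comm s t ▸ hFδ t ht s hs (abs_sub_comm s t ▸ hst)⟩
  exact constant_of_has_deriv_right_zero (fun t ht => (hderiv t ht).continuousWithinAt)
    fun t ht => (hderiv t (Ico_subset_Icc_self ht)).mono_of_mem_nhdsWithin
      (Icc_mem_nhdsGE_of_mem ht)

theorem eq_left_of_sub_le_taylor {F : ℝ → ℝ} {C : ℝ} (hab : a < b) (hf : ContDiffOn ℝ 1 f (Icc a b))
    (hF : ∀ s ∈ Icc a b, ∀ t ∈ Icc a b,
      F s - F t ≤ C * (‖f s - f t - (s - t) • derivWithin f (Icc a b) t‖ + ‖f s - f t‖ ^ 2)) :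
    ∀ t ∈ Icc a b, F t = F a := by
  obtain ⟨K, hK⟩ := hf.exists_lipschitzOnWith one_ne_zero (convex_Icc a b) isCompact_Icc
  refine eq_left_of_forall_sub_le_mul_abs fun ε hε => ?_
  set η := ε / (2 * (|C| + 1))
  have hη : 0 < η := by positivity
  obtain ⟨δ, hδ, hδf⟩ := hf.exists_pos_norm_sub_sub_smul_derivWithin_le hab hη
  refine ⟨min δ (η / (K ^ 2 + 1)), by positivity, fun s hs t ht hst => ?_⟩
  have hlip : ‖f s - f t‖ ≤ K * |s - t| := hK.norm_sub_le hs ht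
  have hsq : ‖f s - f t‖ ^ 2 ≤ η * |s - t| := calc
    ‖f s - f t‖ ^ 2 ≤ (K * |s - t|) ^ 2 := by gcongr
    _ ≤ (K ^ 2 + 1) * |s - t| * |s - t| := by nlinarith [abs_nonneg (s - t)]
    _ ≤ η * |s - t| := by
      gcongr
      exact (le_div_iff₀' (by positivity)).mp (hst.trans_le (min_le_right _ _)).le
  have hCη : |C| * (2 * η) ≤ ε := by
    rw [show |C| * (2 * η) = ε * (|C| / (|C| + 1)) by simp only [η]; field_simp]
    exact mul_le_of_le_one_right hε.le ((div_le_one (by positivity)).2 (by linarith))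
  calc F s - F t ≤ |C| * (η * |s - t| + η * |s - t|) := by
        refine (hF s hs t ht).trans ?_
        gcongr
        · exact le_abs_self C
        · exact hδf s hs t ht (hst.trans_le (min_le_left _ _))
    _ = |C| * (2 * η) * |s - t| := by ring
    _ ≤ ε * |s - t| := by gcongr

end Calculus

theorem Continuous.integrableOn_of_isBounded {E F : Type*} [MetricSpace E] [ProperSpace E]
    [MeasurableSpace E] [OpensMeasurableSpace E] {μ : Measure E} [IsFiniteMeasureOnCompacts μ]
    [NormedAddCommGroup F] {f : E → F} (hf : Continuous f) {s : Set E} (hs : IsBounded s) :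
    IntegrableOn f s μ :=
  (hf.continuousOn.integrableOn_compact hs.isCompact_closure).mono_set subset_closure

theorem MeasureTheory.Measure.addHaar_setOf_inner_eq {E : Type*} [NormedAddCommGroup E]
    [InnerProductSpace ℝ E] [FiniteDimensional ℝ E] [MeasurableSpace E] [BorelSpace E]
    (μ : Measure E) [μ.IsAddHaarMeasure] {v : E} (hv : v ≠ 0) (c : ℝ) : μ {x | ⟪x, v⟫ = c} = 0 := by
  set x₀ : E := (c / ‖v‖ ^ 2) • v
  have hx₀ : ⟪v, x₀⟫ = c := by
    rw [real_inner_smul_right, real_inner_self_eq_norm_sq, div_mul_cancel₀]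
    exact pow_ne_zero 2 (norm_ne_zero_iff.mpr hv)
  have hker : LinearMap.ker (innerSL ℝ v : E →ₗ[ℝ] ℝ) ≠ ⊤ := fun h => hv <| by
    simpa using LinearMap.ext_iff.mp (LinearMap.ker_eq_top.mp h) v
  have hset : {x | ⟪x, v⟫ = c} =
      (· + -x₀) ⁻¹' (LinearMap.ker (innerSL ℝ v : E →ₗ[ℝ] ℝ) : Set E) := by
    ext x
    simp [inner_add_right, real_inner_comm v, hx₀, add_neg_eq_zero]
  rw [hset, measure_preimage_add_right]
  exact Measure.addHaar_submodule μ _ hker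

theorem setIntegral_norm_sub_sq_sub_setIntegral_norm_sub_sq {E : Type*} [NormedAddCommGroup E]
    [InnerProductSpace ℝ E] [CompleteSpace E] [MeasurableSpace E] {μ : Measure E} {A : Set E}
    (hA : μ A ≠ ∞) (hid : IntegrableOn (fun x => x) A μ) {a c : E}
    (ha : IntegrableOn (fun x => ‖x - a‖ ^ 2) A μ) (hc : ∫ x in A, x ∂μ = μ.real A • c) (b : E) :
    (∫ x in A, ‖x - b‖ ^ 2 ∂μ) - ∫ x in A, ‖x - a‖ ^ 2 ∂μ =
      μ.real A * (‖b - a‖ ^ 2 - 2 * ⟪b - a, c - a⟫) := by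
  have hsub : IntegrableOn (fun x => x - a) A μ := hid.sub (integrableOn_const hA)
  have hexpand : ∀ x : E, ‖x - b‖ ^ 2 = ‖x - a‖ ^ 2 - 2 * ⟪b - a, x - a⟫ + ‖b - a‖ ^ 2 := by
    intro x
    rw [show x - b = (x - a) - (b - a) by abel, norm_sub_sq_real, real_inner_comm]
  have hlin : ∫ x in A, ⟪b - a, x - a⟫ ∂μ = μ.real A * ⟪b - a, c - a⟫ := by
    rw [integral_inner hsub, integral_sub hid (integrableOn_const hA), hc, setIntegral_const,
      ← smul_sub, real_inner_smul_right]
  have hinner : IntegrableOn (fun x => 2 * ⟪b - a, x - a⟫) A μ :=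
    (hsub.const_inner (b - a)).const_mul 2
  have hdiff : IntegrableOn (fun x => ‖x - a‖ ^ 2 - 2 * ⟪b - a, x - a⟫) A μ := ha.sub hinner
  simp_rw [hexpand]
  rw [integral_add hdiff (integrableOn_const hA), integral_sub ha hinner, integral_const_mul, hlin,
    setIntegral_const, smul_eq_mul]
  ring

structure IsMassPartition {α ι : Type*} [MeasurableSpace α] (μ : Measure α) (Ω : Set α)
    (m : ι → ℝ) (A : ι → Set α) : Prop where
  measurableSet : ∀ i, MeasurableSet (A i)
  iUnion_eq : ⋃ i, A i = Ω
  aedisjoint : Pairwise fun i j => AEDisjoint μ (A i) (A j)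
  measure_eq : ∀ i, μ (A i) = ENNReal.ofReal (m i)

namespace IsMassPartition

variable {α ι : Type*} [MeasurableSpace α] {μ : Measure α} {Ω : Set α} {m : ι → ℝ}
  {A : ι → Set α}

theorem subset (hA : IsMassPartition μ Ω m A) (i : ι) : A i ⊆ Ω :=
  hA.iUnion_eq ▸ subset_iUnion A i

theorem measureReal_eq (hA : IsMassPartition μ Ω m A) {i : ι} (hm : 0 ≤ m i) :
    μ.real (A i) = m i := by
  rw [measureReal_def, hA.measure_eq, ENNReal.toReal_ofReal hm]

theorem integral_eq_sum [Fintype ι] {F : Type*} [NormedAddCommGroup F] [NormedSpace ℝ F]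
    (hA : IsMassPartition μ Ω m A) {f : α → F} (hf : IntegrableOn f Ω μ) :
    ∫ x in Ω, f x ∂μ = ∑ i, ∫ x in A i, f x ∂μ := by
  calc ∫ x in Ω, f x ∂μ = ∫ x in ⋃ i, A i, f x ∂μ := by rw [hA.iUnion_eq]
    _ = ∑' i, ∫ x in A i, f x ∂μ :=
      integral_iUnion_ae (fun i => (hA.measurableSet i).nullMeasurableSet) hA.aedisjoint
        (hA.iUnion_eq ▸ hf)
    _ = ∑ i, ∫ x in A i, f x ∂μ := tsum_fintype _

end IsMassPartition

def transportCost {ι E : Type*} [Fintype ι] [NormedAddCommGroup E] [MeasurableSpace E]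
    (μ : Measure E) (A : ι → Set E) (z : ι → E) : ℝ :=
  ∑ i, ∫ x in A i, ‖x - z i‖ ^ 2 ∂μ

theorem inner_J_self (u : E3) : ⟪u, J u⟫ = 0 := by
  simp [J, matJ, Matrix.toEuclideanLin, PiLp.inner_apply, Fin.sum_univ_three, Matrix.mulVec,
    dotProduct]
  ring

section Laguerre

variable {N : ℕ} {Ω : Set E3} {z : Fin N → E3} {w : Fin N → ℝ}

theorem measurableSet_lagCell (hΩ : MeasurableSet Ω) (z : Fin N → E3) (w : Fin N → ℝ)
    (i : Fin N) : MeasurableSet (lagCell Ω z w i) := by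
  refine hΩ.inter (measurableSet_setOfPred.2 (.forall fun j => measurableSet_setOfPred.1 ?_))
  exact measurableSet_le (by fun_prop) (by fun_prop)

theorem iUnion_lagCell [Nonempty (Fin N)] (Ω : Set E3) (z : Fin N → E3) (w : Fin N → ℝ) :
    ⋃ i, lagCell Ω z w i = Ω := by
  refine (iUnion_subset fun i x hx => hx.1).antisymm fun x hx => ?_
  obtain ⟨i, -, hi⟩ := Finset.exists_min_image Finset.univ
    (fun j => ‖x - z j‖ ^ 2 - w j) Finset.univ_nonempty
  exact mem_iUnion.mpr ⟨i, hx, fun j => hi j (Finset.mem_univ j)⟩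

-- The common boundary of two cells lies in the hyperplane `2⟪x, z j - z i⟫ = const`.
theorem aedisjoint_lagCell {i j : Fin N} (hz : z i ≠ z j) :
    AEDisjoint volume (lagCell Ω z w i) (lagCell Ω z w j) := by
  refine measure_mono_null (fun x hx => ?_) (Measure.addHaar_setOf_inner_eq volume
    (sub_ne_zero.mpr hz.symm) ((‖z j‖ ^ 2 - w j - ‖z i‖ ^ 2 + w i) / 2))
  have h := le_antisymm (hx.1.2 j) (hx.2.2 i)
  rw [norm_sub_sq_real, norm_sub_sq_real] at h
  simp only [mem_ofPred_eq, inner_sub_right]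
  linarith

theorem isMassPartition_lagCell [Nonempty (Fin N)] (hΩ : MeasurableSet Ω) {m : Fin N → ℝ}
    (hz : Function.Injective z) (hw : ∀ j, volume (lagCell Ω z w j) = ENNReal.ofReal (m j)) :
    IsMassPartition volume Ω m (lagCell Ω z w) where
  measurableSet := measurableSet_lagCell hΩ z w
  iUnion_eq := iUnion_lagCell Ω z w
  aedisjoint _ _ hij := aedisjoint_lagCell (hz.ne hij)
  measure_eq := hw

end Laguerre

theorem transportCost_lagCell_le {N : ℕ} [Nonempty (Fin N)] {Ω : Set E3} (hΩ : IsBounded Ω)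
    {m : Fin N → ℝ} (hm : ∀ i, 0 ≤ m i) {z : Fin N → E3} {w : Fin N → ℝ}
    (hL : IsMassPartition volume Ω m (lagCell Ω z w)) {A : Fin N → Set E3}
    (hA : IsMassPartition volume Ω m A) :
    transportCost volume (lagCell Ω z w) z ≤ transportCost volume A z := by
  set ψ : E3 → ℝ := fun x => Finset.univ.inf' Finset.univ_nonempty fun j => ‖x - z j‖ ^ 2 - w j
  have hψ : Continuous ψ := Continuous.finset_inf'_apply _ fun j _ => by fun_prop
  have hint : ∀ {f : E3 → ℝ}, Continuous f → ∀ s ⊆ Ω, IntegrableOn f s :=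
    fun hf s hs => hf.integrableOn_of_isBounded (hΩ.subset hs)
  have hshift : ∀ B : Fin N → Set E3, IsMassPartition volume Ω m B →
      transportCost volume B z = (∑ i, ∫ x in B i, (‖x - z i‖ ^ 2 - w i)) + ∑ i, w i * m i := by
    intro B hB
    have hcell : ∀ i,
        ∫ x in B i, (‖x - z i‖ ^ 2 - w i) = (∫ x in B i, ‖x - z i‖ ^ 2) - w i * m i :=
      fun i => by
        rw [integral_sub (hint (by fun_prop) _ (hB.subset i))
            (hint continuous_const _ (hB.subset i)), setIntegral_const, hB.measureReal_eq (hm i),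
          smul_eq_mul, mul_comm]
    simp only [hcell, Finset.sum_sub_distrib, sub_add_cancel, transportCost]
  calc transportCost volume (lagCell Ω z w) z
      = (∑ i, ∫ x in lagCell Ω z w i, ψ x) + ∑ i, w i * m i := by
        rw [hshift _ hL]
        congr 1
        refine Finset.sum_congr rfl fun i _ => setIntegral_congr_fun (hL.measurableSet i) ?_
        intro x hx
        exact le_antisymm (Finset.le_inf' _ _ fun j _ => hx.2 j)
          (Finset.inf'_le _ (Finset.mem_univ i))
    _ = (∑ i, ∫ x in A i, ψ x) + ∑ i, w i * m i := by
        rw [← hL.integral_eq_sum (hint hψ Ω subset_rfl), hA.integral_eq_sum (hint hψ Ω subset_rfl)]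
    _ ≤ (∑ i, ∫ x in A i, (‖x - z i‖ ^ 2 - w i)) + ∑ i, w i * m i := by
        gcongr ?_ + _
        refine Finset.sum_le_sum fun i _ => ?_
        exact setIntegral_mono_on (hint hψ _ (hA.subset i)) (hint (by fun_prop) _ (hA.subset i))
          (hA.measurableSet i) fun x _ => Finset.inf'_le _ (Finset.mem_univ i)
    _ = transportCost volume A z := (hshift A hA).symm

theorem transportCost_lagCell_eq {N : ℕ} [Nonempty (Fin N)] {Ω : Set E3} (hΩ : IsBounded Ω)
    {m : Fin N → ℝ} (hm : ∀ i, 0 ≤ m i) {z : Fin N → E3} {w w' : Fin N → ℝ}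
    (h : IsMassPartition volume Ω m (lagCell Ω z w))
    (h' : IsMassPartition volume Ω m (lagCell Ω z w')) :
    transportCost volume (lagCell Ω z w) z = transportCost volume (lagCell Ω z w') z :=
  (transportCost_lagCell_le hΩ hm h h').antisymm (transportCost_lagCell_le hΩ hm h' h)

theorem setIntegral_norm_sub_sq_sub_le {A : Set E3} {R : ℝ} (hA : A ⊆ Metric.closedBall 0 R)
    {a c : E3} (hc : ∫ x in A, x = volume.real A • c) (b : E3) (τ : ℝ) :
    (∫ x in A, ‖x - b‖ ^ 2) - ∫ x in A, ‖x - a‖ ^ 2 ≤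
      volume.real A * (2 * (R + ‖a‖) * ‖b - a - τ • J (a - c)‖ + ‖b - a‖ ^ 2) := by
  have hAb : IsBounded A := Metric.isBounded_closedBall.subset hA
  have hfin : volume A ≠ ∞ := hAb.measure_lt_top.ne
  have hmass : ‖volume.real A • c‖ ≤ R * volume.real A :=
    hc ▸ norm_setIntegral_le_of_norm_le_const hAb.measure_lt_top
      fun x hx => mem_closedBall_zero_iff.mp (hA hx)
  have horth : ⟪τ • J (a - c), volume.real A • c - volume.real A • a⟫ = 0 := by
    rw [← smul_sub, ← neg_sub a c, smul_neg, inner_neg_right, real_inner_smul_right,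
      real_inner_smul_left, real_inner_comm, inner_J_self, mul_zero, mul_zero, neg_zero]
  calc (∫ x in A, ‖x - b‖ ^ 2) - ∫ x in A, ‖x - a‖ ^ 2
      = volume.real A * ‖b - a‖ ^ 2
          - 2 * ⟪b - a - τ • J (a - c), volume.real A • c - volume.real A • a⟫ := by
        rw [setIntegral_norm_sub_sq_sub_setIntegral_norm_sub_sq hfin
          (continuous_id.integrableOn_of_isBounded hAb)
          ((by fun_prop : Continuous fun x : E3 => ‖x - a‖ ^ 2).integrableOn_of_isBounded hAb) hc,
          inner_sub_left (b - a), horth, ← smul_sub, real_inner_smul_right]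
        ring
    _ ≤ volume.real A * ‖b - a‖ ^ 2
          + 2 * (‖b - a - τ • J (a - c)‖ * (R * volume.real A + volume.real A * ‖a‖)) := by
        have hlever : ‖volume.real A • c - volume.real A • a‖ ≤
            R * volume.real A + volume.real A * ‖a‖ := by
          refine (norm_sub_le _ _).trans (add_le_add hmass ?_)
          rw [norm_smul, Real.norm_of_nonneg measureReal_nonneg]
        have hcs := (neg_le_abs _).trans (abs_real_inner_le_norm (b - a - τ • J (a - c))
          (volume.real A • c - volume.real A • a))
        have := mul_le_mul_of_nonneg_left hlever (norm_nonneg (b - a - τ • J (a - c)))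
        linarith
    _ = volume.real A * (2 * (R + ‖a‖) * ‖b - a - τ • J (a - c)‖ + ‖b - a‖ ^ 2) := by ring

def seedVelocity {N : ℕ} (Ω : Set E3) (m : Fin N → ℝ) (z : Fin N → E3) (w : Fin N → ℝ) :
    Fin N → E3 :=
  fun i => J (z i - (m i)⁻¹ • ∫ x in lagCell Ω z w i, x)

theorem transportCost_lagCell_sub_le {N : ℕ} [Nonempty (Fin N)] {Ω : Set E3} {R : ℝ}
    (hR : 0 ≤ R) (hΩ : Ω ⊆ Metric.closedBall 0 R) {m : Fin N → ℝ} (hm : ∀ i, 0 < m i)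
    {z₁ z₂ : Fin N → E3} {w₁ w₂ : Fin N → ℝ} (h₁ : IsMassPartition volume Ω m (lagCell Ω z₁ w₁))
    (h₂ : IsMassPartition volume Ω m (lagCell Ω z₂ w₂)) (τ : ℝ) :
    transportCost volume (lagCell Ω z₂ w₂) z₂ - transportCost volume (lagCell Ω z₁ w₁) z₁ ≤
      (∑ i, m i) *
        (2 * (R + ‖z₁‖) * ‖z₂ - z₁ - τ • seedVelocity Ω m z₁ w₁‖ + ‖z₂ - z₁‖ ^ 2) := by
  have hmass (i : Fin N) : volume.real (lagCell Ω z₁ w₁ i) = m i := h₁.measureReal_eq (hm i).le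
  calc _ ≤ transportCost volume (lagCell Ω z₁ w₁) z₂ - transportCost volume (lagCell Ω z₁ w₁) z₁ :=
        sub_le_sub_right (transportCost_lagCell_le (Metric.isBounded_closedBall.subset hΩ)
          (fun i => (hm i).le) h₂ h₁) _
    _ = ∑ i, ((∫ x in lagCell Ω z₁ w₁ i, ‖x - z₂ i‖ ^ 2)
          - ∫ x in lagCell Ω z₁ w₁ i, ‖x - z₁ i‖ ^ 2) :=
        (Finset.sum_sub_distrib ..).symm
    _ ≤ ∑ i, m i * (2 * (R + ‖z₁ i‖) * ‖z₂ i - z₁ i - τ • seedVelocity Ω m z₁ w₁ i‖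
          + ‖z₂ i - z₁ i‖ ^ 2) := by
        refine Finset.sum_le_sum fun i _ => ?_
        rw [← hmass i]
        refine setIntegral_norm_sub_sq_sub_le ((h₁.subset i).trans hΩ) ?_ _ τ
        rw [hmass i, smul_inv_smul₀ (hm i).ne']
    _ ≤ ∑ i, m i * (2 * (R + ‖z₁‖) * ‖z₂ - z₁ - τ • seedVelocity Ω m z₁ w₁‖ + ‖z₂ - z₁‖ ^ 2) := by
        gcongr with i
        · exact (hm i).le
        · exact norm_le_pi_norm z₁ i
        · exact norm_le_pi_norm (z₂ - z₁ - τ • seedVelocity Ω m z₁ w₁) i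
        · exact norm_le_pi_norm (z₂ - z₁) i
    _ = _ := Finset.sum_mul ..|>.symm

theorem seed_ode_transport_cost_conservation_general
    (Ω : Set E3) (hΩo : IsOpen Ω) (hΩb : Bornology.IsBounded Ω)
    {N : ℕ} (m : Fin N → ℝ) (hm : ∀ i, 0 < m i) (hm1 : ∑ i, m i = 1)
    (T : ℝ) (hT : 0 < T) (z : ℝ → Fin N → E3) (hsol : SeedODESol Ω m T z)
    (w : ℝ → Fin N → ℝ)
    (hw : ∀ t ∈ Icc (0:ℝ) T, ∀ j, volume (lagCell Ω (z t) (w t) j) = ENNReal.ofReal (m j)) :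
    ∃ c : ℝ, ∀ t ∈ Icc (0:ℝ) T,
      (∑ i, ∫ x in lagCell Ω (z t) (w t) i, ‖x - z t i‖ ^ 2) = c := by
  have : Nonempty (Fin N) := by
    by_contra h
    simp [not_nonempty_iff.mp h] at hm1
  obtain ⟨hz, hode⟩ := hsol
  choose hinj w' hw' hvel using hode
  have hpart {t : ℝ} (ht : t ∈ Icc 0 T) {v : Fin N → ℝ}
      (hv : ∀ j, volume (lagCell Ω (z t) v j) = ENNReal.ofReal (m j)) :
      IsMassPartition volume Ω m (lagCell Ω (z t) v) :=
    isMassPartition_lagCell hΩo.measurableSet (fun i j hij => by_contra (hinj t ht i j · hij)) hv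
  have hcost {t : ℝ} (ht : t ∈ Icc 0 T) := transportCost_lagCell_eq hΩb (fun i => (hm i).le)
    (hpart ht (hw t ht)) (hpart ht (hw' t ht))
  have hderiv {t : ℝ} (ht : t ∈ Icc 0 T) :
      derivWithin z (Icc 0 T) t = seedVelocity Ω m (z t) (w' t ht) :=
    (hasDerivWithinAt_pi.2 (hvel t ht)).derivWithin (uniqueDiffOn_Icc hT t ht)
  obtain ⟨R, hR, hΩR⟩ := hΩb.subset_closedBall_lt 0 0
  obtain ⟨Z, hZ⟩ := isCompact_Icc.exists_bound_of_continuousOn hz.continuousOn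
  have hZ0 : 0 ≤ Z := (norm_nonneg _).trans (hZ 0 (left_mem_Icc.2 hT.le))
  refine ⟨_, eq_left_of_sub_le_taylor (C := 2 * (R + Z) + 1) hT hz fun s hs t ht => ?_⟩
  have hstep := transportCost_lagCell_sub_le hR.le hΩR hm (hpart ht (hw' t ht))
    (hpart hs (hw' s hs)) (s - t)
  rw [← hcost hs, ← hcost ht, hm1, one_mul, ← hderiv ht] at hstep
  refine hstep.trans ?_
  have hC : 2 * (R + ‖z t‖) ≤ 2 * (R + Z) + 1 := by linarith [hZ t ht]
  rw [mul_add (2 * (R + Z) + 1)]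
  exact add_le_add (mul_le_mul_of_nonneg_right hC (norm_nonneg _))
    (le_mul_of_one_le_left (by positivity) (by linarith))

/-- **Conservation of the quadratic transport cost along solutions of the seed ODE**
(Remark 3.9 of Bourne, Egan, Pelloni, Wilkinson): the squared Wasserstein 2-distance
`W₂²(L³⌐Ω, Σ_i m_i δ_{z_i(t)}) = Σ_i ∫_{C_i(z(t),w(t))} |x - z_i(t)|² dx` is
constant in time. -/
theorem seed_ode_transport_cost_conservation
    (Ω : Set E3) (hΩo : IsOpen Ω) (hΩb : Bornology.IsBounded Ω) (hΩc : Convex ℝ Ω)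
    (hΩv : volume Ω = 1)
    {N : ℕ} (m : Fin N → ℝ) (hm : ∀ i, 0 < m i) (hm1 : ∑ i, m i = 1)
    (T : ℝ) (hT : 0 < T) (z : ℝ → Fin N → E3) (hsol : SeedODESol Ω m T z)
    (w : ℝ → Fin N → ℝ)
    (hw : ∀ t ∈ Icc (0:ℝ) T, ∀ j, volume (lagCell Ω (z t) (w t) j) = ENNReal.ofReal (m j)) :
    ∃ c : ℝ, ∀ t ∈ Icc (0:ℝ) T,
      (∑ i, ∫ x in lagCell Ω (z t) (w t) i, ‖x - z t i‖ ^ 2) = c :=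
  seed_ode_transport_cost_conservation_general Ω hΩo hΩb m hm hm1 T hT z hsol w hw
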